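/- arXiv:math/0611240 — 5 statements merged into one kernel-verified Lean document; each statement's English description precedes it below -/
import Mathlib

section
/- For complex s with Re(s) > 0, complex a with Re(a) > 0, and complex z with |z| < 1, one has ∑_{n≥0} z^n/(n+a)^s = (1/Γ(s)) ∫_0^∞ t^{s-1} e^{-a t}/(1 - z e^{-t}) dt. -/
/-!
Expanding `1 / (1 - z e^{-t}) = ∑ zⁿ e^{-n t}` turns the integrand into
`∑ zⁿ t^{s-1} e^{-(n+a) t}`, and the Gamma integral `∫₀^∞ t^{s-1} e^{-w t} dt = Γ(s) w^{-s}`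
evaluates each term. Since `|z| < 1`, the integrals of the norms of the terms are dominated by a
geometric series, so the sum and the integral may be interchanged. The Gamma integral is classical
for real `w > 0`; both sides are holomorphic in `w` on the right half-plane, so it persists for
complex `w` by the identity theorem.
-/

open MeasureTheory Set Filter Topology Complex

namespace Complex

lemma eqOn_re_pos_of_eq_ofReal {f g : ℂ → ℂ} (hf : DifferentiableOn ℂ f {w | 0 < w.re})
    (hg : DifferentiableOn ℂ g {w | 0 < w.re}) (hfg : ∀ r : ℝ, 0 < r → f r = g r) :
    EqOn f g {w | 0 < w.re} := by
  have hU : IsOpen {w : ℂ | 0 < w.re} := isOpen_lt continuous_const continuous_re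
  have h_real : ∃ᶠ r : ℝ in 𝓝[≠] 1, f r = g r :=
    (eventually_nhdsWithin_of_eventually_nhds (lt_mem_nhds one_pos)).frequently.mono hfg
  have h_tendsto : Tendsto ((↑) : ℝ → ℂ) (𝓝[≠] 1) (𝓝[≠] ((1 : ℝ) : ℂ)) :=
    continuous_ofReal.continuousWithinAt.tendsto_nhdsWithin fun _ _ ↦ by simp_all
  refine (hf.analyticOnNhd hU).eqOn_of_preconnected_of_frequently_eq (hg.analyticOnNhd hU)
    (convex_halfSpace_re_gt 0).isPreconnected (z₀ := ((1 : ℝ) : ℂ)) (by simp) ?_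
  simpa using h_tendsto.frequently h_real

variable {c w : ℂ}

lemma norm_ofReal_cpow_mul_cexp_neg_mul {t : ℝ} (ht : 0 < t) :
    ‖(t : ℂ) ^ c * cexp (-w * t)‖ = t ^ c.re * Real.exp (-w.re * t) := by
  rw [norm_mul, norm_cpow_eq_rpow_re_of_pos ht, norm_exp]
  simp [mul_re]

lemma norm_ofReal_cpow_mul_cexp_neg_mul_le {w' : ℂ} (hw : w'.re ≤ w.re) {t : ℝ} (ht : 0 < t) :
    ‖(t : ℂ) ^ c * cexp (-w * t)‖ ≤ ‖(t : ℂ) ^ c * cexp (-w' * t)‖ := by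
  rw [norm_ofReal_cpow_mul_cexp_neg_mul ht, norm_ofReal_cpow_mul_cexp_neg_mul ht]
  gcongr

lemma continuousOn_ofReal_cpow_mul_cexp_neg_mul :
    ContinuousOn (fun t : ℝ ↦ (t : ℂ) ^ c * cexp (-w * t)) (Ioi 0) :=
  (continuous_ofReal.continuousOn.cpow_const fun _ ht ↦ ofReal_mem_slitPlane.2 ht).mul
    (by fun_prop)

lemma integrableOn_ofReal_cpow_mul_cexp_neg_mul (hc : -1 < c.re) (hw : 0 < w.re) :
    IntegrableOn (fun t : ℝ ↦ (t : ℂ) ^ c * cexp (-w * t)) (Ioi 0) := by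
  have h_real : IntegrableOn (fun t : ℝ ↦ t ^ c.re * Real.exp (-w.re * t)) (Ioi 0) := by
    simpa using integrableOn_rpow_mul_exp_neg_mul_rpow hc one_pos hw
  refine h_real.mono' (continuousOn_ofReal_cpow_mul_cexp_neg_mul.aestronglyMeasurable
    measurableSet_Ioi) ?_
  filter_upwards [ae_restrict_mem measurableSet_Ioi] with t ht
  exact (norm_ofReal_cpow_mul_cexp_neg_mul ht).le

lemma hasDerivAt_ofReal_cpow_mul_cexp_neg_mul {t : ℝ} (ht : 0 < t) :
    HasDerivAt (fun w ↦ (t : ℂ) ^ c * cexp (-w * t))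
      (-((t : ℂ) ^ (c + 1) * cexp (-w * t))) w := by
  have h := (((hasDerivAt_id w).neg.mul_const (t : ℂ)).cexp).const_mul ((t : ℂ) ^ c)
  refine h.congr_deriv ?_
  rw [cpow_add _ _ (ofReal_ne_zero.2 ht.ne'), cpow_one]
  simp only [Pi.neg_apply, id]
  ring

lemma differentiableOn_integral_ofReal_cpow_mul_cexp_neg_mul (hc : -1 < c.re) :
    DifferentiableOn ℂ (fun w ↦ ∫ t in Ioi (0 : ℝ), (t : ℂ) ^ c * cexp (-w * t))
      {w | 0 < w.re} := by
  intro w₀ (hw₀ : 0 < w₀.re)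
  set ε := w₀.re / 2 with hε_def
  have hε : 0 < ε := half_pos hw₀
  have hre_ge : ∀ w ∈ Metric.ball w₀ ε, ε ≤ w.re := fun w hw ↦ by
    have := (abs_re_le_norm (w - w₀)).trans (mem_ball_iff_norm.1 hw).le
    rw [sub_re, abs_le] at this
    linarith [this.1, hε_def]
  refine (hasDerivAt_integral_of_dominated_loc_of_deriv_le
    (F := fun w t ↦ (t : ℂ) ^ c * cexp (-w * t))
    (F' := fun w t ↦ -((t : ℂ) ^ (c + 1) * cexp (-w * t)))
    (bound := fun t : ℝ ↦ t ^ (c.re + 1) * Real.exp (-ε * t))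
    (Metric.ball_mem_nhds w₀ hε)
    (.of_forall fun _ ↦ continuousOn_ofReal_cpow_mul_cexp_neg_mul.aestronglyMeasurable
      measurableSet_Ioi)
    (integrableOn_ofReal_cpow_mul_cexp_neg_mul hc hw₀)
    (continuousOn_ofReal_cpow_mul_cexp_neg_mul.neg.aestronglyMeasurable measurableSet_Ioi)
    ?_ ?_ ?_).2.differentiableAt.differentiableWithinAt
  · filter_upwards [ae_restrict_mem measurableSet_Ioi] with t (ht : 0 < t) w hw
    rw [norm_neg, norm_ofReal_cpow_mul_cexp_neg_mul ht, add_re, one_re]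
    gcongr
    linarith [hre_ge w hw]
  · simpa [IntegrableOn] using
      integrableOn_rpow_mul_exp_neg_mul_rpow (s := c.re + 1) (by linarith) one_pos hε
  · filter_upwards [ae_restrict_mem measurableSet_Ioi] with t ht w _
    exact hasDerivAt_ofReal_cpow_mul_cexp_neg_mul ht

lemma integral_ofReal_cpow_mul_cexp_neg_mul_Ioi {s : ℂ} (hs : 0 < s.re) (hw : 0 < w.re) :
    ∫ t in Ioi (0 : ℝ), (t : ℂ) ^ (s - 1) * cexp (-w * t) = Gamma s * w ^ (-s) := by
  refine eqOn_re_pos_of_eq_ofReal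
    (f := fun w ↦ ∫ t in Ioi (0 : ℝ), (t : ℂ) ^ (s - 1) * cexp (-w * t))
    (g := fun w ↦ Gamma s * w ^ (-s))
    (differentiableOn_integral_ofReal_cpow_mul_cexp_neg_mul (by simpa using hs))
    (fun w hw ↦ ((differentiableAt_id.cpow_const (Or.inl hw)).const_mul _).differentiableWithinAt)
    (fun r hr ↦ ?_) hw
  have h_arg : arg r ≠ Real.pi := by rw [arg_ofReal_of_nonneg hr.le]; exact Real.pi_ne_zero.symm
  simp_rw [neg_mul]
  rw [integral_cpow_mul_exp_neg_mul_Ioi hs hr, mul_comm, one_div, inv_cpow _ _ h_arg, cpow_neg]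

end Complex

section LerchSeries

variable {s a z : ℂ}

lemma hasSum_lerch_integrand {t : ℝ} (ht : 0 < t) (hz : ‖z‖ < 1) :
    HasSum (fun n : ℕ ↦ (t : ℂ) ^ (s - 1) * cexp (-(n + a) * t) * z ^ n)
      ((t : ℂ) ^ (s - 1) * cexp (-a * t) / (1 - z * cexp (-(t : ℂ)))) := by
  have h_ratio : ‖z * cexp (-(t : ℂ))‖ < 1 := by
    rw [norm_mul, ← ofReal_neg, norm_exp_ofReal]
    exact mul_lt_one_of_nonneg_of_lt_one_left (norm_nonneg z) hz
      (Real.exp_le_one_iff.2 (neg_nonpos.2 ht.le))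
  have h_geom := (hasSum_geometric_of_norm_lt_one h_ratio).mul_left
    ((t : ℂ) ^ (s - 1) * cexp (-a * t))
  rw [← div_eq_mul_inv] at h_geom
  refine h_geom.congr_fun fun n ↦ ?_
  rw [mul_pow, ← exp_nat_mul, show -(n + a) * (t : ℂ) = -a * t + n * -t by ring, exp_add]
  ring

lemma summable_integral_norm_lerch_term (hs : 0 < s.re) (ha : 0 < a.re) (hz : ‖z‖ < 1) :
    Summable fun n : ℕ ↦
      ∫ t in Ioi (0 : ℝ), ‖(t : ℂ) ^ (s - 1) * cexp (-(n + a) * t) * z ^ n‖ := by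
  set I := ∫ t in Ioi (0 : ℝ), ‖(t : ℂ) ^ (s - 1) * cexp (-a * t)‖
  have h_int : IntegrableOn (fun t : ℝ ↦ (t : ℂ) ^ (s - 1) * cexp (-a * t)) (Ioi 0) :=
    integrableOn_ofReal_cpow_mul_cexp_neg_mul (by simpa using hs) ha
  refine ((summable_geometric_of_lt_one (norm_nonneg z) hz).mul_left I).of_nonneg_of_le
    (fun n ↦ integral_nonneg fun _ ↦ norm_nonneg _) fun n ↦ ?_
  rw [mul_comm I, ← integral_const_mul]
  refine setIntegral_mono_on ?_ (h_int.norm.const_mul _) measurableSet_Ioi fun t ht ↦ ?_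
  · exact ((integrableOn_ofReal_cpow_mul_cexp_neg_mul (by simpa using hs)
      (by simpa using add_pos_of_nonneg_of_pos n.cast_nonneg ha)).mul_const _).norm
  · rw [norm_mul, norm_pow, mul_comm]
    gcongr
    exact norm_ofReal_cpow_mul_cexp_neg_mul_le (by simp) ht

end LerchSeries

theorem lerch_integral_repr (s a z : ℂ) (hs : 0 < s.re) (ha : 0 < a.re) (hz : ‖z‖ < 1) :
    ∑' n : ℕ, z ^ n / ((n : ℂ) + a) ^ s =
      (1 / Complex.Gamma s) *
        ∫ t in Set.Ioi (0 : ℝ),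
          (t : ℂ) ^ (s - 1) * Complex.exp (-a * t) / (1 - z * Complex.exp (-(t : ℂ))) := by
  have hs' : -1 < (s - 1).re := by simpa using hs
  have h_re (n : ℕ) : 0 < ((n : ℂ) + a).re := by
    simpa using add_pos_of_nonneg_of_pos n.cast_nonneg ha
  have h_sum := hasSum_integral_of_summable_integral_norm
    (fun n ↦ (integrableOn_ofReal_cpow_mul_cexp_neg_mul hs' (h_re n)).mul_const (z ^ n))
    (summable_integral_norm_lerch_term hs ha hz)
  rw [setIntegral_congr_fun measurableSet_Ioi
    fun t ht ↦ (hasSum_lerch_integrand ht hz).tsum_eq] at h_sum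
  simp_rw [integral_mul_const, integral_ofReal_cpow_mul_cexp_neg_mul_Ioi hs (h_re _)] at h_sum
  refine ((h_sum.mul_left (1 / Gamma s)).congr_fun fun n ↦ ?_).tsum_eq
  rw [cpow_neg, ← mul_assoc, ← mul_assoc, one_div_mul_cancel (Gamma_ne_zero_of_re_pos hs),
    one_mul, div_eq_inv_mul]
end

section
/- For complex s with Re(s) > 0 and real x < 0, li_s(x) = (1/Γ(s)) ∫_0^∞ t^{s-1} e^{-(t-x)}/(1 - e^{-(t-x)}) dt; equivalently li_s(x) = ∫_0^∞ (t^{s-1}/Γ(s)) · li_0(x - t) dt where li_0(y) = 1/(e^{-y} - 1). -/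
/-!
For `t > 0` the integrand factor `e^{x-t} / (1 - e^{x-t})` is the geometric series
`∑_{n ≥ 1} e^{nx} e^{-nt}`, and the Mellin transform of `e^{-nt}` is `Γ(s) n^{-s}`. Integrating
termwise (`hasSum_mellin`, legitimate because `∑ |e^{nx}| n^{-Re s}` converges for `x < 0`)
turns the Mellin transform of `t ↦ li₀(x - t)` into `Γ(s) li_s(x)`.
-/

open MeasureTheory Set Complex

lemma hasSum_cexp_nat_succ_mul {z : ℂ} (hz : z.re < 0) :
    HasSum (fun n : ℕ ↦ cexp ((n + 1 : ℕ) * z)) (cexp z / (1 - cexp z)) := by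
  have hr : ‖cexp z‖ < 1 := by rwa [norm_exp, Real.exp_lt_one_iff]
  have hgeom := (hasSum_geometric_of_norm_lt_one hr).mul_left (cexp z)
  rw [← div_eq_mul_inv] at hgeom
  refine hgeom.congr_fun fun n ↦ ?_
  rw [← exp_nat_mul, ← exp_add]
  push_cast
  ring_nf

lemma norm_cexp_nat_mul_ofReal (n : ℕ) (x : ℝ) : ‖cexp (n * x)‖ = Real.exp x ^ n := by
  rw [← ofReal_natCast, ← ofReal_mul, norm_exp_ofReal, Real.exp_nat_mul]

lemma summable_norm_cexp_nat_succ_mul_div_rpow {x : ℝ} (hx : x < 0) {σ : ℝ} (hσ : 0 ≤ σ) :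
    Summable fun n : ℕ ↦ ‖cexp ((n + 1 : ℕ) * x)‖ / ((n + 1 : ℕ) : ℝ) ^ σ := by
  have hgeom : Summable fun n : ℕ ↦ Real.exp x ^ (n + 1) :=
    (summable_nat_add_iff 1).mpr <|
      summable_geometric_of_lt_one (Real.exp_pos x).le (Real.exp_lt_one_iff.mpr hx)
  refine hgeom.of_nonneg_of_le (fun n ↦ by positivity) fun n ↦ ?_
  rw [norm_cexp_nat_mul_ofReal]
  exact div_le_self (by positivity) (Real.one_le_rpow (by simp) hσ)

lemma hasSum_cexp_nat_succ_mul_div_cpow_mellin {s : ℂ} (hs : 0 < s.re) {x : ℝ} (hx : x < 0) :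
    HasSum (fun n : ℕ ↦ cexp ((n + 1 : ℕ) * x) / ((n + 1 : ℕ) : ℂ) ^ s)
      (mellin (fun t : ℝ ↦ cexp (-(t - x)) / (1 - cexp (-(t - x)))) s / Gamma s) := by
  have hF : ∀ t ∈ Ioi (0 : ℝ), HasSum
      (fun n : ℕ ↦ cexp ((n + 1 : ℕ) * x) * Real.exp (-((n + 1 : ℕ) : ℝ) * t))
      (cexp (-(t - x)) / (1 - cexp (-(t - x)))) := fun t ht ↦ by
    have hre : (-((t : ℂ) - x)).re < 0 := by
      simp only [neg_re, sub_re, ofReal_re]; linarith [mem_Ioi.mp ht]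
    convert hasSum_cexp_nat_succ_mul hre using 2 with n
    rw [ofReal_exp, ← exp_add]
    push_cast
    ring_nf
  have hmellin := hasSum_mellin (fun n ↦ Or.inr (by positivity)) hs hF
    (summable_norm_cexp_nat_succ_mul_div_rpow hx hs.le)
  refine (hmellin.div_const (Gamma s)).congr_fun fun n ↦ ?_
  rw [ofReal_natCast, mul_div_assoc, mul_div_cancel_left₀ _ (Gamma_ne_zero_of_re_pos hs)]

theorem li_convolution_repr (s : ℂ) (hs : 0 < s.re) (x : ℝ) (hx : x < 0) :
    ∑' n : ℕ, Complex.exp ((n + 1 : ℕ) * x) / ((n + 1 : ℕ) : ℂ) ^ s =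
      (1 / Complex.Gamma s) *
        ∫ t in Set.Ioi (0 : ℝ),
          (t : ℂ) ^ (s - 1) * Complex.exp (-((t : ℂ) - x)) / (1 - Complex.exp (-((t : ℂ) - x))) := by
  rw [(hasSum_cexp_nat_succ_mul_div_cpow_mellin hs hx).tsum_eq, mellin, one_div, div_eq_inv_mul]
  simp only [smul_eq_mul, mul_div_assoc]
end

section
/- The function x ↦ 1/(e^{-x} - 1) + 1/x, defined for x ≠ 0, extends to a smooth (C^∞) function on all of ℝ with value -1/2 at x = 0. -/
open Real Filter

theorem li_zero_smooth_extension :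
    ∃ g : ℝ → ℝ, ContDiff ℝ (⊤ : ℕ∞) g ∧ g 0 = -1/2 ∧
      ∀ x : ℝ, x ≠ 0 → g x = 1 / (Real.exp (-x) - 1) + 1 / x := by
  set f : ℝ → ℝ := fun x => Real.exp (-x) - 1 with hfdef
  have hfa : AnalyticAt ℝ f 0 :=
    ((analyticAt_rexp.comp (analyticAt_id.neg)).sub analyticAt_const)
  obtain ⟨p, hp⟩ := hfa
  set k : ℝ → ℝ := dslope f 0 with hkdef
  set h : ℝ → ℝ := dslope k 0 with hhdef
  have hk : HasFPowerSeriesAt k p.fslope 0 := hp.has_fpower_series_dslope_fslope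
  have hh : HasFPowerSeriesAt h p.fslope.fslope 0 := hk.has_fpower_series_dslope_fslope
  -- derivative of f
  have hder : ∀ x : ℝ, HasDerivAt f (-Real.exp (-x)) x := by
    intro x
    simpa [f] using ((Real.hasDerivAt_exp (-x)).comp x ((hasDerivAt_neg x))).sub_const 1
  have hderiv_f : deriv f = fun x => -Real.exp (-x) := funext fun x => (hder x).deriv
  -- k 0 = -1
  have k0 : k 0 = -1 := by
    rw [hkdef, dslope_same, (hder 0).deriv]
    simp
  -- h 0 = 1/2
  have hh0 : h 0 = p.coeff 2 := by
    have := hh.coeff_zero (fun _ => (1:ℝ))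
    simpa [FormalMultilinearSeries.coeff_fslope] using this.symm
  have hcoeff2 : p.coeff 2 = 1/2 := by
    obtain ⟨r, hpr⟩ := hp
    have hfact := hpr.factorial_smul (1:ℝ) 2
    have hid2 : iteratedDeriv 2 f 0 = 1 := by
      rw [iteratedDeriv_succ, iteratedDeriv_one, hderiv_f]
      have : HasDerivAt (fun x : ℝ => -Real.exp (-x)) 1 0 := by
        simpa [Function.comp_def, Pi.neg_def] using (((Real.hasDerivAt_exp (-(0:ℝ))).comp 0 ((hasDerivAt_neg (0:ℝ))))).neg
      exact this.deriv
    rw [← iteratedDeriv_eq_iteratedFDeriv] at hfact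
    rw [hid2] at hfact
    have h2' : Nat.factorial 2 • p.coeff 2 = 1 := hfact
    have h2 : (2:ℝ) * p.coeff 2 = 1 := by
      simpa [Nat.factorial, nsmul_eq_mul] using h2'
    linarith
  have h0 : h 0 = 1/2 := by rw [hh0, hcoeff2]
  -- values away from 0
  have hkval : ∀ x : ℝ, x ≠ 0 → k x = (Real.exp (-x) - 1) / x := by
    intro x hx
    rw [hkdef, dslope_of_ne _ hx, slope_def_field]
    simp [f]
  have hhval : ∀ x : ℝ, x ≠ 0 → h x = (k x + 1) / x := by
    intro x hx
    rw [hhdef, dslope_of_ne _ hx, slope_def_field, k0]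
    ring_nf
  -- k never vanishes
  have hfnz : ∀ x : ℝ, x ≠ 0 → Real.exp (-x) - 1 ≠ 0 := by
    intro x hx
    rw [sub_ne_zero]
    intro hcontra
    apply hx
    have := Real.exp_injective (by simpa using hcontra : Real.exp (-x) = Real.exp 0)
    simpa using this
  have knz : ∀ x : ℝ, k x ≠ 0 := by
    intro x
    rcases eq_or_ne x 0 with rfl | hx
    · rw [k0]; norm_num
    · rw [hkval x hx]
      exact div_ne_zero (hfnz x hx) hx
  -- smoothness of k
  have hks : ContDiff ℝ (⊤ : ℕ∞) k := by
    rw [contDiff_iff_contDiffAt]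
    intro x
    rcases eq_or_ne x 0 with rfl | hx
    · exact hk.analyticAt.contDiffAt
    · have heq : (fun y => (Real.exp (-y) - 1) / y) =ᶠ[nhds x] k := by
        filter_upwards [isOpen_ne.mem_nhds hx] with y hy
        exact (hkval y hy).symm
      have hc : ContDiffAt ℝ (⊤ : ℕ∞) (fun y => (Real.exp (-y) - 1) / y) x :=
        ((Real.contDiff_exp.comp contDiff_neg).sub contDiff_const).contDiffAt.div
          contDiffAt_id hx
      exact hc.congr_of_eventuallyEq heq.symm
  -- smoothness of h
  have hhs : ContDiff ℝ (⊤ : ℕ∞) h := by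
    rw [contDiff_iff_contDiffAt]
    intro x
    rcases eq_or_ne x 0 with rfl | hx
    · exact hh.analyticAt.contDiffAt
    · have heq : (fun y => (k y + 1) / y) =ᶠ[nhds x] h := by
        filter_upwards [isOpen_ne.mem_nhds hx] with y hy
        exact (hhval y hy).symm
      have hc : ContDiffAt ℝ (⊤ : ℕ∞) (fun y => (k y + 1) / y) x :=
        ((hks.add contDiff_const).contDiffAt).div contDiffAt_id hx
      exact hc.congr_of_eventuallyEq heq.symm
  refine ⟨fun x => h x / k x, hhs.div hks knz, ?_, ?_⟩
  · show h 0 / k 0 = -1/2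
    rw [h0, k0]; norm_num
  · intro x hx
    show h x / k x = _
    rw [hhval x hx, hkval x hx]
    have hfx := hfnz x hx
    field_simp
    ring
end

section
/- For a Schwartz function f on ℝ, a positive integer k, and complex s with Re(s) > 1, (1/Γ(s)) ∫_0^∞ x^{s-1} f(x+t) dx = ((-1)^k/Γ(s+k)) ∫_0^∞ x^{s+k-1} f^{(k)}(x+t) dx for every real t. -/
/-!
Integrate by parts once: for a Schwartz function `g` and `0 < re s`, the boundary term
`x ^ s • g x` vanishes at `0` and at `∞`, so the Mellin transform of `g'` at `s + 1` is
`-s` times that of `g` at `s`. Since `Γ (s + 1) = s Γ s`, the quantity `mellin g s / Γ s`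
only changes sign when `(g, s)` is replaced by `(g', s + 1)`; iterate `k` times and apply
this to the translate `x ↦ f (x + t)`, which is again a Schwartz function.
-/

open MeasureTheory Set Filter Asymptotics Topology

namespace SchwartzMap

theorem isBigO_atTop_rpow {F : Type*} [NormedAddCommGroup F] [NormedSpace ℝ F] (g : 𝓢(ℝ, F))
    (a : ℝ) : (g : ℝ → F) =O[atTop] (· ^ a) := by
  refine ((g.isBigO_cocompact_rpow a).mono atTop_le_cocompact).congr' .rfl ?_
  filter_upwards [eventually_ge_atTop 0] with x hx
  rw [Real.norm_of_nonneg hx]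

variable {E : Type*} [NormedAddCommGroup E] [NormedSpace ℂ E]

theorem mellinConvergent (g : 𝓢(ℝ, E)) {s : ℂ} (hs : 0 < s.re) : MellinConvergent g s := by
  have h_bot : (g : ℝ → E) =O[𝓝[>] 0] (· ^ (-(0 : ℝ))) := by
    simpa using ((g.continuous.tendsto 0).mono_left nhdsWithin_le_nhds).isBigO_one ℝ
  exact mellinConvergent_of_isBigO_rpow (g.continuous.locallyIntegrable.locallyIntegrableOn _)
    (g.isBigO_atTop_rpow (-(s.re + 1))) (by linarith) h_bot (by simpa using hs)

theorem tendsto_cpow_smul_atTop (g : 𝓢(ℝ, E)) (s : ℂ) :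
    Tendsto (fun x : ℝ ↦ (x : ℂ) ^ s • g x) atTop (𝓝 0) := by
  have h_cpow : (fun x : ℝ ↦ (x : ℂ) ^ s) =O[atTop] (· ^ s.re) := by
    refine IsBigO.of_bound 1 ?_
    filter_upwards [eventually_gt_atTop 0] with x hx
    rw [Complex.norm_cpow_eq_rpow_re_of_pos hx, one_mul, Real.norm_of_nonneg (by positivity)]
  have h_smul := h_cpow.smul (g.isBigO_atTop_rpow (-(s.re + 1)))
  refine h_smul.trans_tendsto ((tendsto_rpow_neg_atTop one_pos).congr' ?_)
  filter_upwards [eventually_gt_atTop 0] with x hx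
  rw [smul_eq_mul, ← Real.rpow_add hx]
  ring_nf

variable [CompleteSpace E]

theorem mellin_deriv_add_one (g : 𝓢(ℝ, E)) {s : ℂ} (hs : 0 < s.re) :
    mellin (deriv g) (s + 1) = -s • mellin g s := by
  have hs0 : s ≠ 0 := by rintro rfl; simp at hs
  have hcont : ContinuousAt (fun x : ℝ ↦ (x : ℂ) ^ s • g x) 0 :=
    (Complex.continuousAt_ofReal_cpow_const 0 s (Or.inl hs)).smul g.continuous.continuousAt
  have hderiv : ∀ x ∈ Ioi (0 : ℝ), HasDerivAt (fun x : ℝ ↦ (x : ℂ) ^ s • g x)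
      (s • ((x : ℂ) ^ (s - 1) • g x) + (x : ℂ) ^ (s + 1 - 1) • deriv g x) x := by
    intro x hx
    have := (hasDerivAt_ofReal_cpow_const (ne_of_gt hx) hs0).smul (g.hasDerivAt x)
    rwa [add_sub_cancel_right, add_comm, ← mul_smul]
  have hint₁ : IntegrableOn (fun x : ℝ ↦ (x : ℂ) ^ (s - 1) • g x) (Ioi 0) :=
    g.mellinConvergent hs
  have hint₂ : IntegrableOn (fun x : ℝ ↦ (x : ℂ) ^ (s + 1 - 1) • deriv g x) (Ioi 0) :=
    (derivCLM ℝ E g).mellinConvergent (s := s + 1) (by rw [Complex.add_re, Complex.one_re]; linarith)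
  have hibp := integral_Ioi_of_hasDerivAt_of_tendsto hcont.continuousWithinAt hderiv
    ((hint₁.smul s).add hint₂ :) (g.tendsto_cpow_smul_atTop s)
  rw [integral_add (f := fun x : ℝ ↦ s • ((x : ℂ) ^ (s - 1) • g x)) (hint₁.smul s) hint₂,
    integral_smul] at hibp
  simp only [Complex.ofReal_zero, Complex.zero_cpow hs0, zero_smul, sub_zero] at hibp
  rw [mellin, mellin, neg_smul, eq_neg_iff_add_eq_zero, add_comm, hibp]

theorem Gamma_inv_smul_mellin_eq_neg_deriv (g : 𝓢(ℝ, E)) {s : ℂ} (hs : 0 < s.re) :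
    (Complex.Gamma s)⁻¹ • mellin g s =
      -((Complex.Gamma (s + 1))⁻¹ • mellin (deriv g) (s + 1)) := by
  have hs0 : s ≠ 0 := by rintro rfl; simp at hs
  have hΓ : Complex.Gamma s ≠ 0 := Complex.Gamma_ne_zero_of_re_pos hs
  rw [g.mellin_deriv_add_one hs, Complex.Gamma_add_one s hs0, smul_smul, ← neg_smul]
  congr 1
  field_simp

theorem Gamma_inv_smul_mellin_eq_iteratedDeriv (g : 𝓢(ℝ, E)) (k : ℕ) {s : ℂ} (hs : 0 < s.re) :
    (Complex.Gamma s)⁻¹ • mellin g s =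
      ((-1) ^ k / Complex.Gamma (s + k)) • mellin (iteratedDeriv k g) (s + k) := by
  induction k generalizing g s with
  | zero => simp
  | succ n ih =>
    have hs' : 0 < (s + 1).re := by rw [Complex.add_re, Complex.one_re]; linarith
    have hderiv : deriv g = derivCLM ℝ E g := rfl
    have hsn : s + 1 + n = s + (n + 1 : ℕ) := by push_cast; ring
    rw [g.Gamma_inv_smul_mellin_eq_neg_deriv hs, hderiv, ih _ hs', iteratedDeriv_succ', ← hderiv,
      hsn, ← neg_smul, pow_succ, mul_neg_one, neg_div]

end SchwartzMap

theorem gamma_pairing_parts_general (f : SchwartzMap ℝ ℂ) (k : ℕ)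
    (s : ℂ) (hs : 1 < s.re) (t : ℝ) :
    (1 / Complex.Gamma s) * ∫ x in Set.Ioi (0 : ℝ), (x : ℂ) ^ (s - 1) * f (x + t) =
      ((-1 : ℂ) ^ k / Complex.Gamma (s + k)) *
        ∫ x in Set.Ioi (0 : ℝ), (x : ℂ) ^ (s + k - 1) * iteratedDeriv k f (x + t) := by
  have hshift : ⇑(f.compSubConstCLM ℝ (-t)) = fun x ↦ f (x + t) := by
    ext x
    simp
  have hmellin := (f.compSubConstCLM ℝ (-t)).Gamma_inv_smul_mellin_eq_iteratedDeriv k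
    (s := s) (by linarith)
  rw [hshift, iteratedDeriv_comp_add_const] at hmellin
  simpa [mellin, one_div] using hmellin

theorem gamma_pairing_parts (f : SchwartzMap ℝ ℂ) (k : ℕ) (hk : 1 ≤ k)
    (s : ℂ) (hs : 1 < s.re) (t : ℝ) :
    (1 / Complex.Gamma s) * ∫ x in Set.Ioi (0 : ℝ), (x : ℂ) ^ (s - 1) * f (x + t) =
      ((-1 : ℂ) ^ k / Complex.Gamma (s + k)) *
        ∫ x in Set.Ioi (0 : ℝ), (x : ℂ) ^ (s + k - 1) * iteratedDeriv k f (x + t) :=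
  gamma_pairing_parts_general f k s hs t
end

section
/- The distribution li_1(x) = -log|1 - e^x| (a locally integrable function on ℝ) has distributional derivative equal to the principal value of 1/(e^{-x} - 1); i.e., for every compactly supported smooth f, ∫ log|1-e^x| f'(x) dx = lim_{ε↓0} ∫_{|x|>ε} f(x)/(e^{-x}-1) dx. -/
open Real MeasureTheory Filter Set

-- derivative of L x = log|1 - e^x| away from 0
private lemma L_hasDeriv {x : ℝ} (hx : x ≠ 0) :
    HasDerivAt (fun y => Real.log |1 - Real.exp y|) (-(1 / (Real.exp (-x) - 1))) x := by
  have h1 : (1 : ℝ) - Real.exp x ≠ 0 := by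
    have := Real.exp_eq_one_iff x
    intro h
    exact hx (this.1 (by linarith [sub_eq_zero.1 h]))
  have h2 : HasDerivAt (fun y : ℝ => 1 - Real.exp y) (-Real.exp x) x := by
    simpa using (Real.hasDerivAt_exp x).const_sub 1
  have h3 : HasDerivAt (fun y : ℝ => Real.log (1 - Real.exp y))
      (-Real.exp x / (1 - Real.exp x)) x := h2.log h1
  have heq : (fun y : ℝ => Real.log (1 - Real.exp y))
      = fun y : ℝ => Real.log |1 - Real.exp y| := by
    funext y; rw [Real.log_abs]
  rw [heq] at h3
  convert h3 using 1
  have hexp : Real.exp x ≠ 0 := (Real.exp_pos x).ne'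
  rw [Real.exp_neg]
  field_simp

private lemma abs_log_le {x : ℝ} (hx : 0 < x) :
    |Real.log x| ≤ 2 * x ^ (-(1/2) : ℝ) + 2 * x ^ ((1/2) : ℝ) := by
  rcases le_total x 1 with h | h
  · have h1 : |Real.log x| = Real.log x⁻¹ := by
      rw [Real.log_inv, abs_of_nonpos (Real.log_nonpos hx.le h)]
    rw [h1]
    calc Real.log x⁻¹ ≤ (x⁻¹) ^ ((1:ℝ)/2) / (1/2) :=
          Real.log_le_rpow_div (inv_nonneg.2 hx.le) (by norm_num)
      _ = 2 * x ^ (-(1/2) : ℝ) := by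
          rw [Real.inv_rpow hx.le, ← Real.rpow_neg hx.le]
          ring
      _ ≤ _ := le_add_of_nonneg_right (by positivity)
  · have h1 : |Real.log x| = Real.log x := abs_of_nonneg (Real.log_nonneg h)
    rw [h1]
    calc Real.log x ≤ x ^ ((1:ℝ)/2) / (1/2) := Real.log_le_rpow_div hx.le (by norm_num)
      _ = 2 * x ^ ((1/2) : ℝ) := by ring
      _ ≤ _ := le_add_of_nonneg_left (by positivity)

private lemma integrableOn_abs_log {R : ℝ} (hR : 0 < R) :
    IntegrableOn (fun x => |Real.log x|) (Set.Ioc 0 R) volume := by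
  have hg : IntegrableOn (fun x : ℝ => 2 * x ^ (-(1/2) : ℝ) + 2 * x ^ ((1/2) : ℝ))
      (Set.Ioc 0 R) volume := by
    have h1 : IntervalIntegrable (fun x : ℝ => x ^ (-(1/2) : ℝ)) volume 0 R :=
      intervalIntegral.intervalIntegrable_rpow' (by norm_num)
    have h2 : IntervalIntegrable (fun x : ℝ => x ^ ((1/2) : ℝ)) volume 0 R :=
      intervalIntegral.intervalIntegrable_rpow' (by norm_num)
    have := ((h1.const_mul 2).add (h2.const_mul 2))
    rw [intervalIntegrable_iff_integrableOn_Ioc_of_le hR.le] at this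
    exact this
  refine hg.integrable.mono' (Real.measurable_log.abs.aestronglyMeasurable) ?_
  filter_upwards [ae_restrict_mem measurableSet_Ioc] with x hx
  rw [Real.norm_eq_abs, abs_abs]
  exact abs_log_le hx.1

private lemma integrableOn_abs_log_abs {R : ℝ} (hR : 0 < R) :
    IntegrableOn (fun x => abs (Real.log (abs x))) (Set.Icc (-R) R) volume := by
  have hpos : IntegrableOn (fun x => abs (Real.log (abs x))) (Set.Ioc 0 R) volume := by
    refine (integrableOn_abs_log hR).congr_fun (fun x hx => ?_) measurableSet_Ioc
    rw [abs_of_pos hx.1]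
  have hneg : IntegrableOn (fun x => abs (Real.log (abs x))) (Set.Ico (-R) 0) volume := by
    have : MeasurePreserving (fun x : ℝ => -x) volume volume :=
      Measure.measurePreserving_neg volume
    have h2 : IntegrableOn ((fun x => abs (Real.log (abs x))) ∘ (fun x : ℝ => -x)) (Set.Ioc 0 R) volume := by
      refine hpos.congr_fun (fun x hx => ?_) measurableSet_Ioc
      simp [Function.comp, abs_neg]
    have hs : (Neg.neg ⁻¹' (Set.Ico (-R:ℝ) 0)) = Set.Ioc 0 R := by
      ext x
      simp only [Set.mem_preimage, Set.mem_Ico, Set.mem_Ioc]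
      constructor <;> (rintro ⟨a, b⟩; constructor <;> linarith)
    have h3 : IntegrableOn ((fun x => abs (Real.log (abs x))) ∘ Neg.neg)
        (Neg.neg ⁻¹' (Set.Ico (-R) 0)) volume ↔
        IntegrableOn (fun x => abs (Real.log (abs x))) (Set.Ico (-R) 0) volume :=
      MeasurePreserving.integrableOn_comp_preimage (Measure.measurePreserving_neg _)
        (Homeomorph.neg ℝ).measurableEmbedding
    rw [hs] at h3
    exact h3.mp h2
  have hzero : IntegrableOn (fun x => abs (Real.log (abs x))) ({0} : Set ℝ) volume :=
    (integrableOn_singleton_iff enorm_ne_top).mpr (Or.inr (by simp))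
  have hsub : Set.Icc (-R) R ⊆ Set.Ico (-R) 0 ∪ (Set.Ioc 0 R ∪ {0}) := by
    intro x hx
    rcases lt_trichotomy x 0 with h | h | h
    · exact Or.inl ⟨hx.1, h⟩
    · exact Or.inr (Or.inr (by simp [h]))
    · exact Or.inr (Or.inl ⟨h, hx.2⟩)
  exact ((hneg.union (hpos.union hzero)).mono_set hsub)

private lemma L_bound {R x : ℝ} (hR : 1 ≤ R) (hx : x ≠ 0) (hxR : |x| ≤ R) :
    abs (Real.log |1 - Real.exp x|) ≤ abs (Real.log (abs x)) + R := by
  have hR0 : (0:ℝ) < R := lt_of_lt_of_le one_pos hR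
  have key : Real.log (abs x) - R ≤ Real.log |1 - Real.exp x| ∧
      Real.log |1 - Real.exp x| ≤ Real.log (abs x) + R := by
    rcases hx.lt_or_gt with h | h
    · -- x < 0
      have ht0 : 0 < -x := neg_pos.2 h
      have hexplt : Real.exp x < 1 := Real.exp_lt_one_iff.2 h
      have habs : |1 - Real.exp x| = 1 - Real.exp x := abs_of_pos (by linarith)
      have hup : 1 - Real.exp x ≤ -x := by
        have := Real.add_one_le_exp x; linarith
      have hlow : (-x) * Real.exp (-R) ≤ 1 - Real.exp x := by
        have h1 := Real.add_one_le_exp (-x)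
        have h2 : ((-x) + 1) * Real.exp x ≤ Real.exp (-x) * Real.exp x :=
          mul_le_mul_of_nonneg_right h1 (Real.exp_pos x).le
        rw [← Real.exp_add] at h2
        simp at h2
        have h3 : Real.exp (-R) ≤ Real.exp x := Real.exp_le_exp.2 (by
          have := abs_le.1 hxR; linarith [this.1])
        nlinarith [Real.exp_pos x, ht0]
      have hxabs : abs x = -x := abs_of_neg h
      rw [habs, hxabs]
      constructor
      · have := Real.log_le_log (by positivity) hlow
        rw [Real.log_mul (by positivity) (Real.exp_pos _).ne', Real.log_exp] at this
        linarith
      · have h4 := Real.log_le_log (by linarith : (0:ℝ) < 1 - Real.exp x) hup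
        linarith
    · -- 0 < x
      have hexpgt : 1 < Real.exp x := by
        have := Real.add_one_le_exp x; nlinarith
      have habs : |1 - Real.exp x| = Real.exp x - 1 := by
        rw [abs_sub_comm, abs_of_pos (by linarith)]
      have hlow : x ≤ Real.exp x - 1 := by
        have := Real.add_one_le_exp x; linarith
      have hup : Real.exp x - 1 ≤ x * Real.exp R := by
        have h1 := Real.add_one_le_exp (-x)
        have h2 : ((-x) + 1) * Real.exp x ≤ Real.exp (-x) * Real.exp x :=
          mul_le_mul_of_nonneg_right h1 (Real.exp_pos x).le
        rw [← Real.exp_add] at h2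
        simp at h2
        have h3 : Real.exp x ≤ Real.exp R := Real.exp_le_exp.2 (by
          have := abs_le.1 hxR; linarith [this.2])
        nlinarith [Real.exp_pos x]
      have hxabs : abs x = x := abs_of_pos h
      rw [habs, hxabs]
      constructor
      · have := Real.log_le_log h hlow
        linarith
      · have h4 := Real.log_le_log (by linarith : (0:ℝ) < Real.exp x - 1) hup
        rw [Real.log_mul h.ne' (Real.exp_pos _).ne', Real.log_exp] at h4
        linarith
  have h1 := key.1
  have h2 := key.2
  rw [abs_le]
  constructor
  · have : -(abs (Real.log (abs x)) + R) ≤ Real.log (abs x) - R := by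
      have := neg_abs_le (Real.log (abs x)); linarith
    linarith
  · have := le_abs_self (Real.log (abs x)); linarith



private lemma key_identity (f : ℝ → ℝ) (hf : ContDiff ℝ (⊤ : ℕ∞) f) {R ε : ℝ} (hε : 0 < ε)
    (hεR : ε < R) (hfR : ∀ x, R ≤ |x| → f x = 0) :
    ∫ x in {x : ℝ | ε < |x|}, f x / (Real.exp (-x) - 1)
      = (f ε * Real.log |1 - Real.exp ε| - f (-ε) * Real.log |1 - Real.exp (-ε)|)
        + ((∫ x in (-R)..(-ε), Real.log |1 - Real.exp x| * deriv f x)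
          + ∫ x in ε..R, Real.log |1 - Real.exp x| * deriv f x) := by
  set g : ℝ → ℝ := fun x => f x / (Real.exp (-x) - 1) with hg
  set L : ℝ → ℝ := fun x => Real.log |1 - Real.exp x| with hLdef
  set Ld : ℝ → ℝ := fun x => -(1 / (Real.exp (-x) - 1)) with hLd
  have hR0 : 0 < R := hε.trans hεR
  have hdenom : ∀ x : ℝ, x ≠ 0 → Real.exp (-x) - 1 ≠ 0 := by
    intro x hx h
    have h2 : Real.exp (-x) = 1 := by linarith [sub_eq_zero.1 h]
    exact hx (neg_eq_zero.1 ((Real.exp_eq_one_iff _).1 h2))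
  have hfc : Continuous f := hf.continuous
  have hdfc : Continuous (deriv f) := hf.continuous_deriv (by simp)
  have hgcont : ∀ {s : Set ℝ}, (∀ x ∈ s, x ≠ 0) → ContinuousOn g s := by
    intro s hs
    exact hfc.continuousOn.div
      (((Real.continuous_exp.comp continuous_neg).sub continuous_const).continuousOn)
      (fun x hx => hdenom x (hs x hx))
  have hLdcont : ∀ {s : Set ℝ}, (∀ x ∈ s, x ≠ 0) → ContinuousOn Ld s := by
    intro s hs
    exact (continuousOn_const.div
      (((Real.continuous_exp.comp continuous_neg).sub continuous_const).continuousOn)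
      (fun x hx => hdenom x (hs x hx))).neg
  have hset : {x : ℝ | ε < |x|} = Set.Iio (-ε) ∪ Set.Ioi ε := by
    ext x
    simp only [Set.mem_setOf_eq, Set.mem_union, Set.mem_Iio, Set.mem_Ioi, lt_abs]
    constructor
    · rintro (h | h); exacts [Or.inr h, Or.inl (by linarith)]
    · rintro (h | h); exacts [Or.inr (by linarith), Or.inl h]
  -- integrability pieces
  have hIocint : IntegrableOn g (Set.Ioc ε R) volume := by
    refine ((hgcont ?_).integrableOn_Icc).mono_set Set.Ioc_subset_Icc_self
    intro x hx; exact (lt_of_lt_of_le hε hx.1).ne'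
  have hIcoint : IntegrableOn g (Set.Ico (-R) (-ε)) volume := by
    refine ((hgcont ?_).integrableOn_Icc).mono_set Set.Ico_subset_Icc_self
    intro x hx
    have : x ≤ -ε := hx.2
    exact ne_of_lt (by linarith)
  have hIoiRzero : ∀ x ∈ Set.Ioi R, g x = 0 := by
    intro x hx
    have hx' : R < x := hx
    have : f x = 0 := hfR x (by rw [abs_of_pos (hR0.trans hx')]; exact hx'.le)
    simp [hg, this]
  have hIioRzero : ∀ x ∈ Set.Iio (-R), g x = 0 := by
    intro x hx
    have hx' : x < -R := hx
    have : f x = 0 := hfR x (by rw [abs_of_neg (by linarith : x < 0)]; linarith)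
    simp [hg, this]
  have hIoiint : IntegrableOn g (Set.Ioi R) volume :=
    (integrableOn_congr_fun (fun x hx => hIoiRzero x hx) measurableSet_Ioi).2
      (integrableOn_zero)
  have hIioint : IntegrableOn g (Set.Iio (-R)) volume :=
    (integrableOn_congr_fun (fun x hx => hIioRzero x hx) measurableSet_Iio).2
      (integrableOn_zero)
  -- reduce to interval integrals
  have hright : ∫ x in Set.Ioi ε, g x = ∫ x in ε..R, g x := by
    rw [← Set.Ioc_union_Ioi_eq_Ioi hεR.le,
      setIntegral_union (Set.Ioc_disjoint_Ioi le_rfl) measurableSet_Ioi hIocint hIoiint,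
      setIntegral_congr_fun measurableSet_Ioi (fun x hx => hIoiRzero x hx),
      intervalIntegral.integral_of_le hεR.le]
    simp
  have hleft : ∫ x in Set.Iio (-ε), g x = ∫ x in (-R)..(-ε), g x := by
    have hdisj : Disjoint (Set.Iio (-R)) (Set.Ico (-R) (-ε)) :=
      Set.disjoint_left.2 fun x hx hx' => absurd hx'.1 (not_le.2 hx)
    rw [← Set.Iio_union_Ico_eq_Iio (by linarith : -R ≤ -ε),
      setIntegral_union hdisj measurableSet_Ico hIioint hIcoint,
      setIntegral_congr_fun measurableSet_Iio (fun x hx => hIioRzero x hx),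
      integral_Ico_eq_integral_Ioo,
      intervalIntegral.integral_of_le (by linarith : -R ≤ -ε),
      integral_Ioc_eq_integral_Ioo]
    simp
  -- integration by parts, right
  have hfd : ∀ s : Set ℝ, ∀ x ∈ s, HasDerivAt f (deriv f x) x :=
    fun s x _ => ((hf.differentiable (by simp)) x).hasDerivAt
  have hgL : ∀ x : ℝ, f x * Ld x = -g x := by
    intro x; simp only [hg, hLd]; ring
  have hfR0 : f R = 0 := hfR R (by rw [abs_of_pos hR0])
  have hfR0' : f (-R) = 0 := hfR (-R) (by rw [abs_neg, abs_of_pos hR0])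
  have ibpR := intervalIntegral.integral_mul_deriv_eq_deriv_mul (u := f) (v := L)
    (u' := deriv f) (v' := Ld) (a := ε) (b := R)
    (hfd _)
    (fun x hx => by
      rw [Set.uIcc_of_le hεR.le] at hx
      exact L_hasDeriv (lt_of_lt_of_le hε hx.1).ne')
    (hdfc.intervalIntegrable ε R)
    (by
      apply ContinuousOn.intervalIntegrable
      apply hLdcont
      rw [Set.uIcc_of_le hεR.le]
      intro x hx; exact (lt_of_lt_of_le hε hx.1).ne')
  have ibpL := intervalIntegral.integral_mul_deriv_eq_deriv_mul (u := f) (v := L)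
    (u' := deriv f) (v' := Ld) (a := -R) (b := -ε)
    (hfd _)
    (fun x hx => by
      rw [Set.uIcc_of_le (by linarith : -R ≤ -ε)] at hx
      have : x ≤ -ε := hx.2
      exact L_hasDeriv (by linarith : x < 0).ne)
    (hdfc.intervalIntegrable _ _)
    (by
      apply ContinuousOn.intervalIntegrable
      apply hLdcont
      rw [Set.uIcc_of_le (by linarith : -R ≤ -ε)]
      intro x hx
      have : x ≤ -ε := hx.2
      exact (by linarith : x < 0).ne)
  have hnegR : ∫ x in ε..R, f x * Ld x = -∫ x in ε..R, g x := by
    rw [← intervalIntegral.integral_neg]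
    exact intervalIntegral.integral_congr fun x _ => hgL x
  have hnegL : ∫ x in (-R)..(-ε), f x * Ld x = -∫ x in (-R)..(-ε), g x := by
    rw [← intervalIntegral.integral_neg]
    exact intervalIntegral.integral_congr fun x _ => hgL x
  have hcommR : ∫ x in ε..R, deriv f x * L x = ∫ x in ε..R, L x * deriv f x :=
    intervalIntegral.integral_congr fun x _ => mul_comm _ _
  have hcommL : ∫ x in (-R)..(-ε), deriv f x * L x = ∫ x in (-R)..(-ε), L x * deriv f x :=
    intervalIntegral.integral_congr fun x _ => mul_comm _ _
  rw [hnegR, hfR0] at ibpR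
  rw [hnegL, hfR0'] at ibpL
  -- assemble
  rw [hset, setIntegral_union
      (Set.disjoint_left.2 fun x hx hx' => by
        simp only [Set.mem_Iio, Set.mem_Ioi] at hx hx'; linarith)
      measurableSet_Ioi
      (by rw [← Set.Iio_union_Ico_eq_Iio (by linarith : -R ≤ -ε)]
          exact hIioint.union hIcoint)
      (by rw [← Set.Ioc_union_Ioi_eq_Ioi hεR.le]
          exact hIocint.union hIoiint),
    hright, hleft]
  linarith [hcommR, hcommL, ibpR, ibpL]


private lemma eps_log_tendsto :
    Filter.Tendsto (fun ε : ℝ => ε * Real.log (1 - Real.exp (-ε)))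
      (nhdsWithin 0 (Set.Ioi 0)) (nhds 0) := by
  have hxlogx : Filter.Tendsto (fun ε : ℝ => ε * Real.log ε) (nhds 0) (nhds 0) := by
    have h1 := (Real.continuous_negMulLog.tendsto 0).neg
    simp only [Real.negMulLog_zero, neg_zero] at h1
    refine h1.congr fun x => ?_
    simp [Real.negMulLog]
  have hlower : Filter.Tendsto (fun ε : ℝ => ε * Real.log ε - ε ^ 2)
      (nhdsWithin 0 (Set.Ioi 0)) (nhds 0) := by
    have h2 : Filter.Tendsto (fun ε : ℝ => ε ^ 2) (nhds (0:ℝ)) (nhds 0) := by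
      have := (continuous_pow 2 (M := ℝ)).tendsto 0
      simpa using this
    have h3 : Filter.Tendsto (fun ε : ℝ => ε * Real.log ε - ε ^ 2) (nhds 0) (nhds 0) := by
      simpa using hxlogx.sub h2
    exact h3.mono_left nhdsWithin_le_nhds
  have hupper : Filter.Tendsto (fun ε : ℝ => ε * Real.log ε)
      (nhdsWithin 0 (Set.Ioi 0)) (nhds 0) := hxlogx.mono_left nhdsWithin_le_nhds
  refine tendsto_of_tendsto_of_tendsto_of_le_of_le' hlower hupper ?_ ?_
  · filter_upwards [self_mem_nhdsWithin] with ε hε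
    have hε' : 0 < ε := hε
    have h1 := Real.add_one_le_exp ε
    have h2 : (ε + 1) * Real.exp (-ε) ≤ Real.exp ε * Real.exp (-ε) :=
      mul_le_mul_of_nonneg_right h1 (Real.exp_pos _).le
    rw [← Real.exp_add] at h2
    simp only [add_neg_cancel, Real.exp_zero] at h2
    have hu1 : ε * Real.exp (-ε) ≤ 1 - Real.exp (-ε) := by nlinarith [Real.exp_pos (-ε)]
    have hupos : 0 < ε * Real.exp (-ε) := by positivity
    have h3 := Real.log_le_log hupos hu1
    rw [Real.log_mul hε'.ne' (Real.exp_pos _).ne', Real.log_exp] at h3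
    have h4 := mul_le_mul_of_nonneg_left h3 hε'.le
    nlinarith
  · filter_upwards [self_mem_nhdsWithin] with ε hε
    have hε' : 0 < ε := hε
    have h1 := Real.add_one_le_exp (-ε)
    have hu2 : 1 - Real.exp (-ε) ≤ ε := by linarith
    have hexplt : Real.exp (-ε) < 1 := Real.exp_lt_one_iff.2 (by linarith)
    have hupos : 0 < 1 - Real.exp (-ε) := by linarith
    have h3 := Real.log_le_log hupos hu2
    exact mul_le_mul_of_nonneg_left h3 hε'.le

private lemma boundary_tendsto (f : ℝ → ℝ) (hf : ContDiff ℝ (⊤ : ℕ∞) f) (hsupp : HasCompactSupport f) :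
    Filter.Tendsto
      (fun ε : ℝ => f ε * Real.log |1 - Real.exp ε| - f (-ε) * Real.log |1 - Real.exp (-ε)|)
      (nhdsWithin 0 (Set.Ioi 0)) (nhds 0) := by
  obtain ⟨C, hC⟩ := (hsupp.deriv).exists_bound_of_continuous (hf.continuous_deriv (by simp))
  have hC0 : 0 ≤ C := le_trans (norm_nonneg _) (hC 0)
  have hlip : ∀ a b : ℝ, |f a - f b| ≤ C * |a - b| := by
    intro a b
    have := Convex.norm_image_sub_le_of_norm_deriv_le
      (fun x _ => (hf.differentiable (by simp)) x) (fun x _ => hC x)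
      convex_univ (Set.mem_univ b) (Set.mem_univ a)
    simpa [Real.norm_eq_abs] using this
  have T1 : Filter.Tendsto (fun ε : ℝ => f ε * ε) (nhdsWithin 0 (Set.Ioi 0)) (nhds 0) := by
    have h3 : Filter.Tendsto (fun ε : ℝ => f ε * ε) (nhds (0:ℝ)) (nhds 0) := by
      simpa using ((hf.continuous.tendsto 0).mul (continuous_id.tendsto (0:ℝ)))
    exact h3.mono_left nhdsWithin_le_nhds
  have T2 : Filter.Tendsto (fun ε : ℝ => (f ε - f (-ε)) * Real.log (1 - Real.exp (-ε)))
      (nhdsWithin 0 (Set.Ioi 0)) (nhds 0) := by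
    apply squeeze_zero_norm' (a := fun ε => 2 * C * |ε * Real.log (1 - Real.exp (-ε))|)
    · filter_upwards [self_mem_nhdsWithin] with ε hε
      have hε' : (0:ℝ) < ε := hε
      have h1 : |ε - -ε| = 2 * ε := by rw [abs_of_pos (by linarith)]; ring
      have h2 : |ε * Real.log (1 - Real.exp (-ε))| = ε * |Real.log (1 - Real.exp (-ε))| := by
        rw [abs_mul, abs_of_pos hε']
      calc ‖(f ε - f (-ε)) * Real.log (1 - Real.exp (-ε))‖
          = |f ε - f (-ε)| * |Real.log (1 - Real.exp (-ε))| := by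
            rw [Real.norm_eq_abs, abs_mul]
        _ ≤ (C * |ε - -ε|) * |Real.log (1 - Real.exp (-ε))| :=
            mul_le_mul_of_nonneg_right (hlip ε (-ε)) (abs_nonneg _)
        _ = 2 * C * |ε * Real.log (1 - Real.exp (-ε))| := by rw [h1, h2]; ring
    · have := (eps_log_tendsto.abs).const_mul (2 * C)
      simpa using this
  have hid : ∀ ε : ℝ, 0 < ε →
      f ε * Real.log |1 - Real.exp ε| - f (-ε) * Real.log |1 - Real.exp (-ε)|
        = f ε * ε + (f ε - f (-ε)) * Real.log (1 - Real.exp (-ε)) := by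
    intro ε hε
    have hexplt : Real.exp (-ε) < 1 := Real.exp_lt_one_iff.2 (by linarith)
    have hu : 0 < 1 - Real.exp (-ε) := by linarith
    have hA : Real.log |1 - Real.exp (-ε)| = Real.log (1 - Real.exp (-ε)) := by
      rw [abs_of_pos hu]
    have h1 : |1 - Real.exp ε| = Real.exp ε - 1 := by
      rw [abs_sub_comm, abs_of_pos]
      nlinarith [Real.add_one_le_exp ε]
    have h2 : Real.exp ε - 1 = Real.exp ε * (1 - Real.exp (-ε)) := by
      rw [mul_sub, mul_one, ← Real.exp_add]
      simp
    have hB : Real.log |1 - Real.exp ε| = ε + Real.log (1 - Real.exp (-ε)) := by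
      rw [h1, h2, Real.log_mul (Real.exp_pos _).ne' hu.ne', Real.log_exp]
    rw [hA, hB]
    ring
  have := T1.add T2
  rw [add_zero] at this
  apply this.congr'
  filter_upwards [self_mem_nhdsWithin] with ε hε
  exact (hid ε hε).symm

theorem li_one_distributional_deriv (f : ℝ → ℝ)
    (hf : ContDiff ℝ (⊤ : ℕ∞) f) (hsupp : HasCompactSupport f) :
    Filter.Tendsto
      (fun ε : ℝ => ∫ x in {x : ℝ | ε < |x|}, f x / (Real.exp (-x) - 1))
      (nhdsWithin 0 (Set.Ioi 0))
      (nhds (∫ x : ℝ, Real.log |1 - Real.exp x| * deriv f x)) := by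
  obtain ⟨R₀, hR₀⟩ := hsupp.isBounded.subset_closedBall 0
  set R : ℝ := max 1 (R₀ + 1) with hRdef
  have hR1 : 1 ≤ R := le_max_left _ _
  have hR0 : (0:ℝ) < R := lt_of_lt_of_le one_pos hR1
  have hnot : ∀ x : ℝ, R ≤ |x| → x ∉ tsupport f := by
    intro x hx hmem
    have h1 : |x| ≤ R₀ := by
      have := hR₀ hmem
      simpa [Metric.mem_closedBall, Real.dist_eq] using this
    have h2 : R₀ + 1 ≤ R := le_max_right _ _
    linarith
  have hfR : ∀ x : ℝ, R ≤ |x| → f x = 0 := fun x hx =>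
    image_eq_zero_of_notMem_tsupport (hnot x hx)
  have hdfR : ∀ x : ℝ, R ≤ |x| → deriv f x = 0 := by
    intro x hx
    by_contra hne
    exact hnot x hx (support_deriv_subset (by simpa [Function.mem_support] using hne))
  set h : ℝ → ℝ := fun x => Real.log |1 - Real.exp x| * deriv f x with hh
  have hint : Integrable h := by
    obtain ⟨C, hC⟩ := (hsupp.deriv).exists_bound_of_continuous (hf.continuous_deriv (by simp))
    have hC0 : 0 ≤ C := le_trans (norm_nonneg _) (hC 0)
    have hmeas : AEStronglyMeasurable h volume :=
      ((Real.measurable_log.comp ((measurable_const.sub Real.measurable_exp).abs)).mul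
        (hf.continuous_deriv (by simp)).measurable).aestronglyMeasurable
    have hIcc : IntegrableOn h (Set.Icc (-R) R) volume := by
      have hgint : IntegrableOn (fun x => C * (abs (Real.log (abs x)) + R))
          (Set.Icc (-R) R) volume :=
        (((integrableOn_abs_log_abs hR0).add
          (integrableOn_const measure_Icc_lt_top.ne)).const_mul C)
      refine hgint.integrable.mono' hmeas.restrict ?_
      filter_upwards [ae_restrict_mem measurableSet_Icc] with x hx
      rcases eq_or_ne x 0 with rfl | hx0
      · have : h 0 = 0 := by simp [hh]
        rw [this]
        simp only [norm_zero]
        positivity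
      · have hxR : |x| ≤ R := abs_le.2 ⟨hx.1, hx.2⟩
        rw [Real.norm_eq_abs]
        calc |h x| = abs (Real.log |1 - Real.exp x|) * |deriv f x| := by
              rw [hh]; exact abs_mul _ _
          _ ≤ (abs (Real.log (abs x)) + R) * C := by
              refine mul_le_mul (L_bound hR1 hx0 hxR) ?_ (abs_nonneg _) (by positivity)
              simpa [Real.norm_eq_abs] using hC x
          _ = C * (abs (Real.log (abs x)) + R) := mul_comm _ _
    have hind : Set.indicator (Set.Icc (-R) R) h = h := by
      apply Set.indicator_eq_self.2
      intro x hx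
      rw [Function.mem_support] at hx
      by_contra hmem
      apply hx
      have hxR : R ≤ |x| := by
        simp only [Set.mem_Icc, not_and_or, not_le] at hmem
        rcases hmem with h1 | h1
        · rw [abs_of_neg (by linarith)]; linarith
        · rw [abs_of_pos (by linarith)]; linarith
      simp [hh, hdfR x hxR]
    rw [← hind]
    exact (integrable_indicator_iff measurableSet_Icc).2 hIcc
  have hII : ∀ a b : ℝ, IntervalIntegrable h volume a b := fun a b => hint.intervalIntegrable
  have TR : Filter.Tendsto (fun ε : ℝ => ∫ x in ε..R, h x) (nhdsWithin 0 (Set.Ioi 0))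
      (nhds (∫ x in (0:ℝ)..R, h x)) := by
    have hc : Continuous fun a : ℝ => ∫ x in a..R, h x := by
      have h1 := (intervalIntegral.continuous_primitive hII R).neg
      refine h1.congr fun a => ?_
      rw [Pi.neg_apply, intervalIntegral.integral_symm a R, neg_neg]
    exact (hc.tendsto 0).mono_left nhdsWithin_le_nhds
  have TL : Filter.Tendsto (fun ε : ℝ => ∫ x in (-R)..(-ε), h x) (nhdsWithin 0 (Set.Ioi 0))
      (nhds (∫ x in (-R)..(0:ℝ), h x)) := by
    have hc : Continuous fun b : ℝ => ∫ x in (-R)..b, h x :=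
      intervalIntegral.continuous_primitive hII (-R)
    have h2 : Filter.Tendsto (fun ε : ℝ => -ε) (nhds (0:ℝ)) (nhds 0) := by
      simpa using (continuous_neg.tendsto (0:ℝ))
    exact ((hc.tendsto 0).comp h2).mono_left nhdsWithin_le_nhds
  have hB := boundary_tendsto f hf hsupp
  have hsum : (0:ℝ) + ((∫ x in (-R)..(0:ℝ), h x) + ∫ x in (0:ℝ)..R, h x) = ∫ x : ℝ, h x := by
    rw [zero_add, intervalIntegral.integral_add_adjacent_intervals (hII _ _) (hII _ _),
      intervalIntegral.integral_of_le (by linarith : -R ≤ R)]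
    apply setIntegral_eq_integral_of_forall_compl_eq_zero
    intro x hx
    have hxR : R ≤ |x| := by
      simp only [Set.mem_Ioc, not_and_or, not_lt, not_le] at hx
      rcases hx with h1 | h1
      · rw [abs_of_nonpos (by linarith)]; linarith
      · rw [abs_of_pos (by linarith)]; linarith
    simp [hh, hdfR x hxR]
  have hfinal := hB.add (TL.add TR)
  rw [hsum] at hfinal
  apply hfinal.congr'
  filter_upwards [Ioo_mem_nhdsGT_of_mem (Set.left_mem_Ico.2 one_pos)] with ε hε
  exact (key_identity f hf hε.1 (lt_of_lt_of_le hε.2 hR1) hfR).symm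
end
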